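/- arXiv:math/0412336 — 5 statements merged into one kernel-verified Lean document; each statement's English description precedes it below -/
import Mathlib

section
/- For every integer m ≥ 1, the polynomial identity p_{mp−1}(z) = U_{m−1}(Δ(z)/2) · p_{p−1}(z) holds for all z ∈ ℂ, where U_{m−1} is the Chebyshev polynomial of the second kind. (This is the identity form of Theorem 2.1: the zeros of p_{mp−1} are exactly the Dirichlet points, i.e., the zeros of p_{p−1}, together with the points where U_{m−1}(Δ/2) vanishes.) -/
open Polynomial Matrix

/-- The one-step transfer matrix `A_k(z)` for periodic OPRL. -/
noncomputable def JacobiA (a b : ℕ → ℝ) (k : ℕ) (z : ℂ) : Matrix (Fin 2) (Fin 2) ℂ :=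
  ((a (k + 1) : ℂ))⁻¹ • !![z - (b (k + 1) : ℂ), -(a k : ℂ); (a (k + 1) : ℂ), 0]

/-- The transfer matrix `T_n(z) = A_{n-1}(z) ⋯ A_0(z)`. -/
noncomputable def JacobiT (a b : ℕ → ℝ) : ℕ → ℂ → Matrix (Fin 2) (Fin 2) ℂ
  | 0, _ => 1
  | n + 1, z => JacobiA a b n z * JacobiT a b n z

/-- The discriminant `Δ(z) = tr T_p(z)`. -/
noncomputable def JacobiDisc (a b : ℕ → ℝ) (p : ℕ) (z : ℂ) : ℂ :=
  (JacobiT a b p z).trace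

/-- Cayley–Hamilton for 2×2 complex matrices. -/
lemma cheb_sq (M : Matrix (Fin 2) (Fin 2) ℂ) :
    M ^ 2 = M.trace • M - M.det • 1 := by
  ext i j
  fin_cases i <;> fin_cases j <;>
    simp [pow_two, Matrix.mul_apply, Matrix.trace_fin_two, Matrix.det_fin_two,
      Fin.sum_univ_two, Matrix.one_apply] <;> ring

/-- Powers of a 2×2 matrix of determinant one via Chebyshev polynomials. -/
lemma cheb_pow (M : Matrix (Fin 2) (Fin 2) ℂ) (hdet : M.det = 1) (m : ℕ) :
    M ^ (m + 1) =
      ((Polynomial.Chebyshev.U ℂ (m : ℤ)).eval (M.trace / 2)) • M -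
      ((Polynomial.Chebyshev.U ℂ ((m : ℤ) - 1)).eval (M.trace / 2)) • 1 := by
  induction m with
  | zero => simp [Polynomial.Chebyshev.U_zero, Polynomial.Chebyshev.U_neg_one]
  | succ n ih =>
    have hrec : Polynomial.Chebyshev.U ℂ ((n : ℤ) + 1) =
        2 * X * Polynomial.Chebyshev.U ℂ (n : ℤ) -
          Polynomial.Chebyshev.U ℂ ((n : ℤ) - 1) := by
      have h := Polynomial.Chebyshev.U_add_two ℂ ((n : ℤ) - 1)
      rw [show (n:ℤ)-1+2 = (n:ℤ)+1 by ring, show (n:ℤ)-1+1 = (n:ℤ) by ring] at h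
      exact h
    have hsq := cheb_sq M
    rw [hdet] at hsq
    have : M ^ (n + 1 + 1) = M * M ^ (n + 1) := (pow_succ' M (n+1))
    rw [this, ih]
    push_cast
    rw [hrec]
    simp only [Polynomial.eval_sub, Polynomial.eval_mul, Polynomial.eval_ofNat,
      Polynomial.eval_X]
    rw [mul_sub, mul_smul_comm, mul_smul_comm, ← pow_two, hsq]
    simp only [mul_one, smul_sub, smul_smul]
    ring_nf
    module

/-- **Theorem 2.1 (identity form).** For periodic Jacobi parameters of period `p`,
`p_{mp-1}(z) = U_{m-1}(Δ(z)/2) · p_{p-1}(z)` for all `z ∈ ℂ`, where `U` is the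
Chebyshev polynomial of the second kind. -/
theorem oprl_periodic_pmp_minus_one_chebyshev_identity
    (p : ℕ) (hp : 1 ≤ p) (a b : ℕ → ℝ)
    (ha : ∀ n, 1 ≤ n → 0 < a n)
    (hpera : ∀ n, 1 ≤ n → a (n + p) = a n)
    (hperb : ∀ n, 1 ≤ n → b (n + p) = b n)
    (ha0 : a 0 = a p)
    (P : ℕ → Polynomial ℝ)
    (hP0 : P 0 = 1)
    (hPrec0 : (X : Polynomial ℝ) * P 0 = a 1 • P 1 + b 1 • P 0)
    (hPrec : ∀ n, 1 ≤ n →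
      (X : Polynomial ℝ) * P n = a (n + 1) • P (n + 1) + b (n + 1) • P n + a n • P (n - 1))
    (m : ℕ) (hm : 1 ≤ m) (z : ℂ) :
    aeval z (P (m * p - 1)) =
      (Polynomial.Chebyshev.U ℂ ((m : ℤ) - 1)).eval (JacobiDisc a b p z / 2) *
        aeval z (P (p - 1)) := by
  have haC : ∀ n, (a n : ℂ) ≠ 0 := by
    intro n
    rcases Nat.eq_zero_or_pos n with h | h
    · subst h; rw [ha0]; exact_mod_cast (ha p hp).ne'
    · exact_mod_cast (ha n h).ne'
  -- entries of the transfer matrix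
  have hent : ∀ n, (JacobiT a b n z) 0 0 = aeval z (P n) ∧
      (JacobiT a b n z) 1 0 = (if n = 0 then 0 else aeval z (P (n - 1))) := by
    intro n
    induction n with
    | zero => simp [JacobiT, Matrix.one_apply, hP0]
    | succ n ih =>
      obtain ⟨ih0, ih1⟩ := ih
      have hmul0 : (JacobiT a b (n+1) z) 0 0 =
          ((a (n+1) : ℂ))⁻¹ * ((z - (b (n+1):ℂ)) * (JacobiT a b n z) 0 0
            - (a n : ℂ) * (JacobiT a b n z) 1 0) := by
        show (JacobiA a b n z * JacobiT a b n z) 0 0 = _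
        simp [JacobiA, Matrix.mul_apply, Fin.sum_univ_two]
        ring
      have hmul1 : (JacobiT a b (n+1) z) 1 0 = (JacobiT a b n z) 0 0 := by
        show (JacobiA a b n z * JacobiT a b n z) 1 0 = _
        simp [JacobiA, Matrix.mul_apply, Fin.sum_univ_two]
        field_simp [haC (n+1)]
      constructor
      · rw [hmul0, ih0, ih1]
        rcases Nat.eq_zero_or_pos n with rfl | hn
        · have hthis := congrArg (aeval z) hPrec0
          simp [hP0] at hthis
          norm_num [hP0]
          have hc := mul_inv_cancel₀ (haC 1)
          linear_combination ((a 1:ℂ))⁻¹ * hthis + (aeval z) (P 1) * hc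
        · have hthis := congrArg (aeval z) (hPrec n hn)
          simp at hthis
          rw [if_neg (by omega)]
          have hc := mul_inv_cancel₀ (haC (n+1))
          linear_combination ((a (n+1):ℂ))⁻¹ * hthis + (aeval z) (P (n+1)) * hc
      · rw [hmul1, ih0]; simp
  -- periodicity of A
  have hA : ∀ k, JacobiA a b (k + p) z = JacobiA a b k z := by
    intro k
    have h1 : a (k + p + 1) = a (k + 1) := by
      rw [show k + p + 1 = (k+1) + p by ring, hpera (k+1) (by omega)]
    have h2 : b (k + p + 1) = b (k + 1) := by
      rw [show k + p + 1 = (k+1) + p by ring, hperb (k+1) (by omega)]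
    have h3 : a (k + p) = a k := by
      rcases Nat.eq_zero_or_pos k with rfl | hk
      · simpa using ha0.symm
      · exact hpera k hk
    simp [JacobiA, h1, h2, h3]
  have hAm : ∀ j k, JacobiA a b (k + j * p) z = JacobiA a b k z := by
    intro j
    induction j with
    | zero => simp
    | succ j ih =>
      intro k
      rw [show k + (j+1) * p = (k + j*p) + p by ring, hA, ih]
  -- shift by multiples of the period
  have hshift : ∀ j n, JacobiT a b (j * p + n) z = JacobiT a b n z * JacobiT a b (j * p) z := by
    intro j n
    induction n with
    | zero => simp [JacobiT]
    | succ n ih =>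
      show JacobiA a b (j*p+n) z * JacobiT a b (j*p+n) z = _
      rw [show j*p + n = n + j*p by ring, hAm j n, ← show j*p + n = n + j*p by ring, ih]
      show _ = (JacobiA a b n z * JacobiT a b n z) * _
      rw [mul_assoc]
  have hTpow : ∀ j, JacobiT a b (j * p) z = (JacobiT a b p z) ^ j := by
    intro j
    induction j with
    | zero => simp [JacobiT]
    | succ j ih =>
      rw [show (j+1) * p = j * p + p by ring, hshift j p, ih, ← pow_succ']
  -- determinant
  have hdet : ∀ n, (JacobiT a b n z).det = (a 0 : ℂ) / (a n : ℂ) := by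
    intro n
    induction n with
    | zero => simp [JacobiT, div_self (haC 0)]
    | succ n ih =>
      show (JacobiA a b n z * JacobiT a b n z).det = _
      rw [Matrix.det_mul, ih]
      have hdA : (JacobiA a b n z).det = (a n : ℂ) * ((a (n+1) : ℂ))⁻¹ := by
        rw [JacobiA, Matrix.det_smul, Matrix.det_fin_two_of]
        simp only [Fintype.card_fin]
        have hc := mul_inv_cancel₀ (haC (n+1))
        linear_combination ((a n:ℂ) * ((a (n+1):ℂ))⁻¹) * hc
      rw [hdA, div_eq_mul_inv, div_eq_mul_inv]
      have hc := mul_inv_cancel₀ (haC n)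
      linear_combination ((a 0:ℂ) * ((a (n+1):ℂ))⁻¹) * hc
  -- assemble
  obtain ⟨k, rfl⟩ : ∃ k, m = k + 1 := ⟨m - 1, by omega⟩
  have hdet1 : (JacobiT a b p z).det = 1 := by
    rw [hdet p, ← ha0, div_self (haC 0)]
  have e1 : aeval z (P ((k+1) * p - 1)) = (JacobiT a b ((k+1)*p) z) 1 0 := by
    have h := (hent ((k+1)*p)).2
    rw [if_neg (Nat.mul_ne_zero (k.succ_ne_zero) (by omega))] at h
    exact h.symm
  have h2 := (hent p).2
  rw [if_neg (by omega)] at h2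
  have hidx : ((k+1 : ℕ) : ℤ) - 1 = (k : ℤ) := by push_cast; ring
  rw [e1, hTpow (k+1), cheb_pow _ hdet1 k, hidx]
  simp [Matrix.sub_apply, Matrix.smul_apply, Matrix.one_apply, h2, JacobiDisc]
end

section
/- For every integer m ≥ 1 and every z ∈ ℂ, one has p_{mp−1}(z) = 0 if and only if either p_{p−1}(z) = 0 (i.e., z is a Dirichlet point, a point where the 21-entry of T_p(z) vanishes) or Δ(z) = 2·cos(πq/m) for some integer q with 1 ≤ q ≤ m − 1. (Theorem 2.1: exact description of the zeros of p_{mp−1}.) -/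
/-!
Write `S_n` for the rescaled Chebyshev polynomials of the second kind, `S_n(2 cos θ) sin θ =
sin((n + 1) θ)`. The `(2,1)` entry (`1 0` with Lean's indices) of `T_n(z)` is `p_{n-1}(z)`,
`det T_p = a_0 / a_p = 1`, and periodicity gives `T_{mp} = T_p ^ m`. For a `2 × 2` matrix `M`
of determinant one, Cayley–Hamilton `M² = (tr M) M - 1` gives
`M ^ m = S_{m-1}(tr M) M - S_{m-2}(tr M)`, hence `p_{mp-1}(z) = S_{m-1}(Δ(z)) p_{p-1}(z)`.
Finally `S_{m-1}` has degree `m - 1` and the `m - 1` distinct real zeros `2 cos (π q / m)`,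
`1 ≤ q ≤ m - 1`, so it has no other complex zeros.
-/

open Polynomial Matrix

namespace Polynomial.Chebyshev

theorem eval_U_complex_eq_zero_iff (n : ℕ) (w : ℂ) :
    (U ℂ n).eval w = 0 ↔ ∃ k < n, w = Real.cos ((k + 1) * Real.pi / (n + 1)) := by
  have hcard : (U ℝ n).roots.card = (U ℝ n).natDegree := by
    rw [natDegree_eq_of_degree_eq_some (degree_U_natCast ℝ n), roots_U_real,
      Finset.card_val, Finset.card_image_of_injOn
        ((Finset.range n).nodup_map_iff_injOn.mp (roots_U_real_nodup n)), Finset.card_range]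
  -- `U ℝ n` has `n` distinct real roots, so it splits over `ℝ` and has no other complex roots.
  have hroots : (U ℂ n).roots = (U ℝ n).roots.map Complex.ofRealHom := by
    rw [roots_map_of_injective_of_card_eq_natDegree Complex.ofReal_injective hcard, map_U]
  have hne : U ℂ n ≠ 0 := fun h => by simpa [h] using degree_U_natCast ℂ n
  rw [← IsRoot.def, ← mem_roots hne, hroots, roots_U_real]
  simp [eq_comm]

theorem eval_S_complex_eq_zero_iff (n : ℕ) (z : ℂ) :
    (S ℂ n).eval z = 0 ↔
      ∃ q : ℕ, 1 ≤ q ∧ q ≤ n ∧ z = 2 * Complex.cos (Real.pi * q / (n + 1)) := by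
  have hcos (k : ℕ) : ((Real.cos ((k + 1) * Real.pi / (n + 1)) : ℝ) : ℂ) =
      Complex.cos (Real.pi * (k + 1 : ℕ) / (n + 1)) := by
    push_cast; ring_nf
  rw [S_eq_U_comp_half_mul_X, eval_comp, eval_mul, eval_C, eval_X, eval_U_complex_eq_zero_iff,
    invOf_eq_inv]
  constructor
  · rintro ⟨k, hk, hz⟩
    refine ⟨k + 1, by omega, hk, ?_⟩
    linear_combination 2 * hz + 2 * hcos k
  · rintro ⟨q, hq1, hqn, rfl⟩
    refine ⟨q - 1, by omega, ?_⟩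
    rw [hcos, Nat.sub_add_cancel hq1]
    ring

end Polynomial.Chebyshev

namespace Matrix

variable {R : Type*} [CommRing R]

theorem fin_two_sq_eq (M : Matrix (Fin 2) (Fin 2) R) :
    M ^ 2 = M.trace • M - M.det • (1 : Matrix (Fin 2) (Fin 2) R) := by
  ext i j
  fin_cases i <;> fin_cases j <;>
    simp [sq, mul_apply, trace_fin_two, det_fin_two] <;> ring

open Polynomial.Chebyshev in
theorem fin_two_pow_succ_eq_of_det_eq_one {M : Matrix (Fin 2) (Fin 2) R} (hM : M.det = 1)
    (n : ℕ) :
    M ^ (n + 1) = (S R n).eval M.trace • M - (S R (n - 1 : ℤ)).eval M.trace • 1 := by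
  induction n with
  | zero => simp
  | succ n ih =>
    have hS : S R ((n + 1 : ℕ) : ℤ) = X * S R n - S R (n - 1 : ℤ) := by
      push_cast; exact S_add_one R n
    rw [pow_succ, ih, sub_mul, smul_mul_assoc, smul_mul_assoc, ← sq,
      fin_two_sq_eq, hM, hS]
    simp only [Nat.cast_add, Nat.cast_one, add_sub_cancel_right, eval_sub, eval_mul, eval_X,
      one_mul, one_smul]
    module

open Polynomial.Chebyshev in
theorem fin_two_pow_succ_apply_one_zero_of_det_eq_one {M : Matrix (Fin 2) (Fin 2) R}
    (hM : M.det = 1) (n : ℕ) : (M ^ (n + 1)) 1 0 = (S R n).eval M.trace * M 1 0 := by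
  simp [fin_two_pow_succ_eq_of_det_eq_one hM]

end Matrix

section Jacobi

variable {a b : ℕ → ℝ}

theorem det_JacobiA (k : ℕ) (z : ℂ) : (JacobiA a b k z).det = a k / a (k + 1) := by
  rw [JacobiA, det_smul, det_fin_two_of, Fintype.card_fin]
  rcases eq_or_ne (a (k + 1) : ℂ) 0 with h | h
  · simp [h]
  · field_simp
    ring

theorem JacobiT_succ_apply_zero_zero (n : ℕ) (z : ℂ) :
    JacobiT a b (n + 1) z 0 0 =
      ((z - b (n + 1)) * JacobiT a b n z 0 0 - a n * JacobiT a b n z 1 0) / a (n + 1) := by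
  simp [JacobiT, JacobiA, mul_apply, Fin.sum_univ_two]
  ring

theorem JacobiT_succ_apply_one_zero {n : ℕ} (hn : a (n + 1) ≠ 0) (z : ℂ) :
    JacobiT a b (n + 1) z 1 0 = JacobiT a b n z 0 0 := by
  simp [JacobiT, JacobiA, mul_apply, Fin.sum_univ_two, hn]

theorem mul_det_JacobiT (ha : ∀ k, a (k + 1) ≠ 0) (n : ℕ) (z : ℂ) :
    a n * (JacobiT a b n z).det = a 0 := by
  induction n with
  | zero => simp [JacobiT]
  | succ n ih =>
    rw [JacobiT, det_mul, det_JacobiA, ← ih]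
    field_simp [ha n]

theorem JacobiA_add_period {p : ℕ} (hpera : ∀ n, 1 ≤ n → a (n + p) = a n)
    (hperb : ∀ n, 1 ≤ n → b (n + p) = b n) (ha0 : a 0 = a p) (k : ℕ) (z : ℂ) :
    JacobiA a b (k + p) z = JacobiA a b k z := by
  have hak : a (k + p) = a k := by
    rcases Nat.eq_zero_or_pos k with rfl | hk
    · rw [zero_add, ha0]
    · exact hpera k hk
  rw [JacobiA, JacobiA, Nat.add_right_comm, hpera (k + 1) (by omega), hperb (k + 1) (by omega),
    hak]

theorem JacobiT_add_of_periodic {p : ℕ} {z : ℂ}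
    (hper : ∀ k, JacobiA a b (k + p) z = JacobiA a b k z) (n : ℕ) :
    JacobiT a b (n + p) z = JacobiT a b n z * JacobiT a b p z := by
  induction n with
  | zero => simp [JacobiT]
  | succ n ih =>
    rw [Nat.add_right_comm, JacobiT, JacobiT, hper, ih, mul_assoc]

theorem JacobiT_mul_of_periodic {p : ℕ} {z : ℂ}
    (hper : ∀ k, JacobiA a b (k + p) z = JacobiA a b k z) (m : ℕ) :
    JacobiT a b (m * p) z = JacobiT a b p z ^ m := by
  induction m with
  | zero => simp [JacobiT]
  | succ m ih => rw [Nat.succ_mul, JacobiT_add_of_periodic hper, ih, pow_succ]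


theorem JacobiT_succ_apply_one_zero_eq_aeval (ha : ∀ k, a (k + 1) ≠ 0) {P : ℕ → ℝ[X]}
    (hP0 : P 0 = 1)
    (hPrec0 : (X : ℝ[X]) * P 0 = a 1 • P 1 + b 1 • P 0)
    (hPrec : ∀ n, 1 ≤ n →
      (X : ℝ[X]) * P n = a (n + 1) • P (n + 1) + b (n + 1) • P n + a n • P (n - 1))
    (z : ℂ) (n : ℕ) :
    JacobiT a b (n + 1) z 1 0 = aeval z (P n) := by
  have hrec : ∀ n, 1 ≤ n → aeval z (P (n + 1)) =
      ((z - b (n + 1)) * aeval z (P n) - a n * aeval z (P (n - 1))) / a (n + 1) := by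
    intro n hn
    have := congrArg (aeval z) (hPrec n hn)
    simp only [map_mul, map_add, aeval_X, map_smul, Complex.real_smul] at this
    field_simp [ha n]
    linear_combination -this
  suffices JacobiT a b (n + 1) z 0 0 = aeval z (P (n + 1)) ∧
      JacobiT a b (n + 1) z 1 0 = aeval z (P n) from this.2
  induction n with
  | zero =>
    have := congrArg (aeval z) hPrec0
    simp only [hP0, map_mul, map_add, aeval_X, map_smul, Complex.real_smul, map_one] at this
    refine ⟨?_, by rw [JacobiT_succ_apply_one_zero (ha 0)]; simp [JacobiT, hP0]⟩
    rw [JacobiT_succ_apply_zero_zero]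
    simp [JacobiT]
    field_simp [ha 0]
    linear_combination this
  | succ n ih =>
    refine ⟨?_, by rw [JacobiT_succ_apply_one_zero (ha _), ih.1]⟩
    rw [JacobiT_succ_apply_zero_zero, ih.1, ih.2, hrec (n + 1) (by omega), Nat.add_sub_cancel]

end Jacobi

/-- **Theorem 2.1.** For periodic Jacobi parameters of period `p` and `m ≥ 1`,
`p_{mp-1}(z) = 0` iff `z` is a Dirichlet point (a zero of `p_{p-1}`) or
`Δ(z) = 2 cos(πq/m)` for some integer `1 ≤ q ≤ m-1`. -/
theorem oprl_periodic_zeros_of_pmp_minus_one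
    (p : ℕ) (hp : 1 ≤ p) (a b : ℕ → ℝ)
    (ha : ∀ n, 1 ≤ n → 0 < a n)
    (hpera : ∀ n, 1 ≤ n → a (n + p) = a n)
    (hperb : ∀ n, 1 ≤ n → b (n + p) = b n)
    (ha0 : a 0 = a p)
    (P : ℕ → Polynomial ℝ)
    (hP0 : P 0 = 1)
    (hPrec0 : (X : Polynomial ℝ) * P 0 = a 1 • P 1 + b 1 • P 0)
    (hPrec : ∀ n, 1 ≤ n →
      (X : Polynomial ℝ) * P n = a (n + 1) • P (n + 1) + b (n + 1) • P n + a n • P (n - 1))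
    (m : ℕ) (hm : 1 ≤ m) (z : ℂ) :
    aeval z (P (m * p - 1)) = 0 ↔
      aeval z (P (p - 1)) = 0 ∨
        ∃ q : ℕ, 1 ≤ q ∧ q ≤ m - 1 ∧
          JacobiDisc a b p z = 2 * Complex.cos (Real.pi * q / m) := by
  obtain ⟨n, rfl⟩ : ∃ n, m = n + 1 := ⟨m - 1, by omega⟩
  have ha' (k : ℕ) : a (k + 1) ≠ 0 := (ha (k + 1) (by omega)).ne'
  have hentry (k : ℕ) (hk : 1 ≤ k) : JacobiT a b k z 1 0 = aeval z (P (k - 1)) := by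
    conv_lhs => rw [← Nat.sub_add_cancel hk]
    exact JacobiT_succ_apply_one_zero_eq_aeval ha' hP0 hPrec0 hPrec z _
  have hdet : (JacobiT a b p z).det = 1 := by
    have h : a p * (JacobiT a b p z).det = a 0 := mul_det_JacobiT ha' p z
    rw [ha0, mul_eq_left₀ (by exact_mod_cast (ha p hp).ne')] at h
    exact h
  have hpow : JacobiT a b ((n + 1) * p) z = JacobiT a b p z ^ (n + 1) :=
    JacobiT_mul_of_periodic (JacobiA_add_period hpera hperb ha0 · z) (n + 1)
  rw [← hentry _ (Nat.mul_pos n.succ_pos hp), ← hentry p hp, hpow,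
    fin_two_pow_succ_apply_one_zero_of_det_eq_one hdet, mul_eq_zero,
    Polynomial.Chebyshev.eval_S_complex_eq_zero_iff, or_comm, JacobiDisc]
  simp only [Nat.add_sub_cancel, Nat.cast_add, Nat.cast_one]
end

section
/- For every interval I ⊆ ℝ and all integers n, n' ≥ 0, the number of zeros of p_n lying in I and the number of zeros of p_{n'} lying in I differ by at most |n − n'|. (This is the variational/interlacing principle, eq. (2.22) of the paper.) -/
/-!
The confluent Christoffel–Darboux identity `a (m+1) • W(p_m, p_{m+1}) = ∑_{k ≤ m} p_k ^ 2`,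
with `p_0 = 1`, shows that the Wronskian of consecutive orthonormal polynomials has no real
zero. Rolle's theorem for `p_m / p_{m+1}` (Sturm separation) then puts a zero of each of the two
polynomials between any two zeros of the other, so their zero counts in an interval differ by at
most one, and the bound for `p_n, p_{n'}` follows by telescoping.
-/

open Polynomial Finset

theorem Finset.card_le_card_add_one_of_exists_mem_between {α : Type*} [LinearOrder α]
    (s t : Finset α) (hst : ∀ x ∈ s, ∀ y ∈ s, x < y → ∃ z ∈ t, x < z ∧ z < y) :
    s.card ≤ t.card + 1 := by
  classical
  induction s using Finset.induction_on_max generalizing t with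
  | empty => simp
  | insert a s hlt ih =>
    rcases s.eq_empty_or_nonempty with rfl | hs
    · simp
    obtain ⟨z, hzt, hmz, hza⟩ := hst _ (mem_insert_of_mem (s.max'_mem hs)) a (mem_insert_self a s)
      (hlt _ (s.max'_mem hs))
    have hs_t : s.card ≤ (t.erase z).card + 1 := ih _ fun x hx y hy hxy => by
      obtain ⟨w, hwt, hxw, hwy⟩ := hst x (mem_insert_of_mem hx) y (mem_insert_of_mem hy) hxy
      exact ⟨w, mem_erase.2 ⟨(hwy.trans_le ((s.le_max' y hy).trans hmz.le)).ne, hwt⟩, hxw, hwy⟩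
    rw [card_insert_of_notMem fun ha => (hlt a ha).false, ← card_erase_add_one hzt]
    omega

theorem exists_zero_between_of_wronskian_ne_zero {f g f' g' : ℝ → ℝ} {x y : ℝ} (hxy : x < y)
    (hf : ∀ t ∈ Set.Icc x y, HasDerivAt f (f' t) t) (hg : ∀ t ∈ Set.Icc x y, HasDerivAt g (g' t) t)
    (hW : ∀ t ∈ Set.Icc x y, f t * g' t - f' t * g t ≠ 0) (hfx : f x = 0) (hfy : f y = 0) :
    ∃ z ∈ Set.Ioo x y, g z = 0 := by
  by_contra! hg0
  have hgI : ∀ t ∈ Set.Icc x y, g t ≠ 0 := by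
    intro t ht
    rcases ht.1.eq_or_lt with hxt | hxt
    · subst hxt; exact fun h => hW _ ht (by simp [hfx, h])
    rcases ht.2.eq_or_lt with hty | hty
    · subst hty; exact fun h => hW _ ht (by simp [hfy, h])
    exact hg0 t ⟨hxt, hty⟩
  have hdiv : ∀ t ∈ Set.Icc x y,
      HasDerivAt (fun t => f t / g t) ((f' t * g t - f t * g' t) / g t ^ 2) t :=
    fun t ht => (hf t ht).div (hg t ht) (hgI t ht)
  obtain ⟨c, hc, hc0⟩ := exists_hasDerivAt_eq_zero hxy
    (fun t ht => (hdiv t ht).continuousAt.continuousWithinAt) (by simp [hfx, hfy])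
    (fun t ht => hdiv t (Set.Ioo_subset_Icc_self ht))
  have hcI := Set.Ioo_subset_Icc_self hc
  rw [div_eq_zero_iff, or_iff_left (pow_ne_zero 2 (hgI c hcI))] at hc0
  exact hW c hcI (by linarith)

theorem Polynomial.ncard_setOf_eval_eq_zero_le_add_one_of_wronskian_ne_zero {f g : ℝ[X]}
    {I : Set ℝ} (hI : I.OrdConnected) (hW : ∀ x ∈ I, (wronskian f g).eval x ≠ 0) :
    {x ∈ I | f.eval x = 0}.ncard ≤ {x ∈ I | g.eval x = 0}.ncard + 1 := by
  have hfinite : ∀ h : ℝ[X], (h = 0 → wronskian f g = 0) → {x ∈ I | h.eval x = 0}.Finite := by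
    intro h hW0
    by_contra hinf
    obtain ⟨x, hxI, -⟩ := Set.Infinite.nonempty hinf
    have h0 : h = 0 := eq_zero_of_infinite_isRoot h (Set.Infinite.mono (fun x hx => hx.2) hinf)
    exact hW x hxI (by simp [hW0 h0])
  have hf := hfinite f fun h => by simp [h, wronskian_zero_left]
  have hg := hfinite g fun h => by simp [h, wronskian_zero_right]
  rw [Set.ncard_eq_toFinset_card _ hf, Set.ncard_eq_toFinset_card _ hg]
  refine Finset.card_le_card_add_one_of_exists_mem_between _ _ fun x hx y hy hxy => ?_
  simp only [Set.Finite.mem_toFinset, Set.mem_ofPred_eq] at hx hy ⊢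
  have hIcc : Set.Icc x y ⊆ I := hI.out hx.1 hy.1
  obtain ⟨z, hz, hgz⟩ := exists_zero_between_of_wronskian_ne_zero hxy
    (fun t _ => f.hasDerivAt t) (fun t _ => g.hasDerivAt t)
    (fun t ht => by simpa [wronskian] using hW t (hIcc ht)) hx.2 hy.2
  exact ⟨z, ⟨hIcc (Set.Ioo_subset_Icc_self hz), hgz⟩, hz⟩

theorem Polynomial.abs_ncard_sub_ncard_le_one_of_wronskian_ne_zero {f g : ℝ[X]}
    {I : Set ℝ} (hI : I.OrdConnected) (hW : ∀ x ∈ I, (wronskian f g).eval x ≠ 0) :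
    |({x ∈ I | f.eval x = 0}.ncard : ℤ) - {x ∈ I | g.eval x = 0}.ncard| ≤ 1 := by
  have hfg := ncard_setOf_eval_eq_zero_le_add_one_of_wronskian_ne_zero hI hW
  have hgf := ncard_setOf_eval_eq_zero_le_add_one_of_wronskian_ne_zero (f := g) (g := f) hI
    fun x hx => by rw [← wronskian_neg_eq, eval_neg, neg_ne_zero]; exact hW x hx
  rw [abs_le]
  constructor <;> omega

theorem abs_sub_le_of_abs_sub_succ_le_one {c : ℕ → ℤ} (hc : ∀ m, |c (m + 1) - c m| ≤ 1)
    (n n' : ℕ) : |c n - c n'| ≤ |(n : ℤ) - n'| := by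
  wlog h : n ≤ n' generalizing n n'
  · rw [abs_sub_comm, abs_sub_comm (n : ℤ)]
    exact this n' n (by omega)
  have hstep : ∀ d : ℕ, |c (n + d) - c n| ≤ d := by
    intro d
    induction d with
    | zero => simp
    | succ d ih =>
      calc |c (n + d + 1) - c n| ≤ |c (n + d + 1) - c (n + d)| + |c (n + d) - c n| :=
            abs_sub_le _ _ _
        _ ≤ 1 + d := add_le_add (hc _) ih
        _ = ((d + 1 : ℕ) : ℤ) := by push_cast; ring
  obtain ⟨d, rfl⟩ := Nat.exists_eq_add_of_le h
  rw [abs_sub_comm, abs_sub_comm (n : ℤ)]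
  simpa using hstep d

theorem jacobi_smul_wronskian_eq_sum_sq {a b : ℕ → ℝ} {P : ℕ → ℝ[X]} (hP0 : P 0 = 1)
    (hPrec0 : (X : ℝ[X]) * P 0 = a 1 • P 1 + b 1 • P 0)
    (hPrec : ∀ n, 1 ≤ n →
      (X : ℝ[X]) * P n = a (n + 1) • P (n + 1) + b (n + 1) • P n + a n • P (n - 1))
    (m : ℕ) : a (m + 1) • wronskian (P m) (P (m + 1)) = ∑ k ∈ range (m + 1), P k ^ 2 := by
  simp only [smul_eq_C_mul] at hPrec0 hPrec ⊢
  induction m with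
  | zero =>
    rw [hP0, mul_one, mul_one] at hPrec0
    have h := congrArg derivative hPrec0
    simp only [derivative_X, derivative_add, derivative_C_mul, derivative_C, add_zero] at h
    simp [wronskian, hP0, ← h]
  | succ m ih =>
    have h := hPrec (m + 1) le_add_self
    rw [Nat.add_sub_cancel] at h
    have h' := congrArg derivative h
    simp only [derivative_mul, derivative_X, derivative_C, zero_mul, zero_add, one_mul,
      derivative_add] at h'
    rw [sum_range_succ, ← ih]
    simp only [wronskian]
    linear_combination derivative (P (m + 1)) * h - P (m + 1) * h'

theorem jacobi_eval_wronskian_ne_zero {a b : ℕ → ℝ} {P : ℕ → ℝ[X]} (hP0 : P 0 = 1)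
    (hPrec0 : (X : ℝ[X]) * P 0 = a 1 • P 1 + b 1 • P 0)
    (hPrec : ∀ n, 1 ≤ n →
      (X : ℝ[X]) * P n = a (n + 1) • P (n + 1) + b (n + 1) • P n + a n • P (n - 1))
    (m : ℕ) (x : ℝ) : (wronskian (P m) (P (m + 1))).eval x ≠ 0 := by
  have hsum : 0 < (∑ k ∈ range (m + 1), P k ^ 2).eval x := by
    rw [eval_finsetSum]
    calc (0 : ℝ) < (P 0 ^ 2).eval x := by simp [hP0]
      _ ≤ _ := single_le_sum (f := fun k => (P k ^ 2).eval x)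
          (fun k _ => by rw [eval_pow]; positivity) (mem_range.2 m.succ_pos)
  rw [← jacobi_smul_wronskian_eq_sum_sq hP0 hPrec0 hPrec m, eval_smul, smul_eq_mul] at hsum
  exact fun h => by simp [h] at hsum

theorem oprl_zero_count_interval_stability_general
    (a b : ℕ → ℝ)
    (P : ℕ → Polynomial ℝ)
    (hP0 : P 0 = 1)
    (hPrec0 : (X : Polynomial ℝ) * P 0 = a 1 • P 1 + b 1 • P 0)
    (hPrec : ∀ n, 1 ≤ n →
      (X : Polynomial ℝ) * P n = a (n + 1) • P (n + 1) + b (n + 1) • P n + a n • P (n - 1))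
    (I : Set ℝ) (hI : I.OrdConnected) (n n' : ℕ) :
    |(({x ∈ I | (P n).eval x = 0}.ncard : ℤ)) - ({x ∈ I | (P n').eval x = 0}.ncard : ℤ)| ≤
      |(n : ℤ) - (n' : ℤ)| := by
  refine abs_sub_le_of_abs_sub_succ_le_one
    (c := fun m => ({x ∈ I | (P m).eval x = 0}.ncard : ℤ)) (fun m => ?_) n n'
  rw [abs_sub_comm]
  exact Polynomial.abs_ncard_sub_ncard_le_one_of_wronskian_ne_zero hI
    fun x _ => jacobi_eval_wronskian_ne_zero hP0 hPrec0 hPrec m x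

/-- **Eq. (2.22), variational/interlacing principle.** For orthonormal polynomials of any
Jacobi matrix, the number of zeros of `p_n` in an interval `I ⊆ ℝ` and the number of
zeros of `p_{n'}` in `I` differ by at most `|n - n'|`. -/
theorem oprl_zero_count_interval_stability
    (a b : ℕ → ℝ)
    (ha : ∀ n, 1 ≤ n → 0 < a n)
    (P : ℕ → Polynomial ℝ)
    (hP0 : P 0 = 1)
    (hPrec0 : (X : Polynomial ℝ) * P 0 = a 1 • P 1 + b 1 • P 0)
    (hPrec : ∀ n, 1 ≤ n →
      (X : Polynomial ℝ) * P n = a (n + 1) • P (n + 1) + b (n + 1) • P n + a n • P (n - 1))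
    (I : Set ℝ) (hI : I.OrdConnected) (n n' : ℕ) :
    |(({x ∈ I | (P n).eval x = 0}.ncard : ℤ)) - ({x ∈ I | (P n').eval x = 0}.ncard : ℤ)| ≤
      |(n : ℤ) - (n' : ℤ)| :=
  oprl_zero_count_interval_stability_general a b P hP0 hPrec0 hPrec I hI n n'
end

section
/- Fix r with 1 ≤ r ≤ p and z₀ ∈ ℂ with Δ(z₀) ∉ [−2, 2]. Then lim_{m→∞} Γ_+(z₀)^{−m} · p_{mp+r−1}(z₀) = j_r(z₀). Consequently, if j_r(z₀) ≠ 0, then there exist ε > 0 and M such that p_{mp+r−1}(z) ≠ 0 whenever |z − z₀| < ε and m ≥ M. (Theorem 2.4, parts (2.39) and (1).) -/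
open Polynomial Matrix Filter

/-- The Jost-type function `j_r(z) = a(z)·(T_r)₂₂ + b(z)·(T_r)₂₁`, built from the
roots `Γ₊, Γ₋` of `Γ² - Δ(z)Γ + 1 = 0` with `|Γ₊| > |Γ₋|`. -/
noncomputable def JacobiJost (a b : ℕ → ℝ) (p r : ℕ) (Γp Γm : ℂ) (z : ℂ) : ℂ :=
  (JacobiT a b p z 1 0 / (Γp - Γm)) * (JacobiT a b r z 1 1) +
    ((JacobiT a b p z 0 0 - Γm) / (Γp - Γm)) * (JacobiT a b r z 1 0)

/- ### Auxiliary lemmas -/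

lemma T_entries (a b : ℕ → ℝ) (ha : ∀ n, 1 ≤ n → 0 < a n)
    (P : ℕ → Polynomial ℝ) (hP0 : P 0 = 1)
    (hPrec0 : (X : Polynomial ℝ) * P 0 = a 1 • P 1 + b 1 • P 0)
    (hPrec : ∀ n, 1 ≤ n →
      (X : Polynomial ℝ) * P n = a (n + 1) • P (n + 1) + b (n + 1) • P n + a n • P (n - 1))
    (z : ℂ) :
    ∀ n : ℕ, JacobiT a b n z 0 0 = aeval z (P n) ∧
      JacobiT a b n z 1 0 = (if n = 0 then 0 else aeval z (P (n - 1))) := by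
  intro n
  induction n with
  | zero => simp [JacobiT, hP0]
  | succ n ih =>
    obtain ⟨ih0, ih1⟩ := ih
    have hA : (a (n+1) : ℂ) ≠ 0 := by
      exact_mod_cast (ha (n+1) (Nat.one_le_iff_ne_zero.mpr (Nat.succ_ne_zero n))).ne'
    have h10 : JacobiT a b (n+1) z 1 0 = aeval z (P n) := by
      show (JacobiA a b n z * JacobiT a b n z) 1 0 = _
      simp [JacobiA, Matrix.mul_apply, Fin.sum_univ_two]
      field_simp
      rw [ih0]
    refine ⟨?_, by simpa using h10⟩
    show (JacobiA a b n z * JacobiT a b n z) 0 0 = _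
    have hexp : (JacobiA a b n z * JacobiT a b n z) 0 0
        = ((a (n+1) : ℂ))⁻¹ * ((z - b (n+1)) * JacobiT a b n z 0 0 - a n * JacobiT a b n z 1 0) := by
      simp [JacobiA, Matrix.mul_apply, Fin.sum_univ_two]; ring
    rw [hexp, ih0, ih1]
    rcases Nat.eq_zero_or_pos n with hn | hn
    · subst hn
      have := congrArg (aeval z) hPrec0
      simp [hP0] at this
      simp only [if_pos rfl, ↓reduceIte, hP0, _root_.map_one, mul_zero, sub_zero]
      field_simp
      linear_combination this
    · have := congrArg (aeval z) (hPrec n hn)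
      simp at this
      rw [if_neg hn.ne']
      field_simp
      linear_combination this

lemma A_per (p : ℕ) (a b : ℕ → ℝ)
    (hpera : ∀ n, 1 ≤ n → a (n + p) = a n)
    (hperb : ∀ n, 1 ≤ n → b (n + p) = b n)
    (ha0 : a 0 = a p) (k : ℕ) (z : ℂ) :
    JacobiA a b (k + p) z = JacobiA a b k z := by
  have h1 : a (k + p + 1) = a (k + 1) := by
    have := hpera (k+1) (Nat.le_add_left 1 k); rw [← this]; ring_nf
  have h2 : b (k + p + 1) = b (k + 1) := by
    have := hperb (k+1) (Nat.le_add_left 1 k); rw [← this]; ring_nf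
  have h3 : a (k + p) = a k := by
    rcases Nat.eq_zero_or_pos k with h | h
    · subst h; simpa using ha0.symm
    · exact hpera k h
  simp [JacobiA, h1, h2, h3]

lemma T_add (p : ℕ) (a b : ℕ → ℝ)
    (hpera : ∀ n, 1 ≤ n → a (n + p) = a n)
    (hperb : ∀ n, 1 ≤ n → b (n + p) = b n)
    (ha0 : a 0 = a p) (z : ℂ) :
    ∀ n, JacobiT a b (n + p) z = JacobiT a b n z * JacobiT a b p z := by
  intro n
  induction n with
  | zero => simp [JacobiT]
  | succ n ih =>
    have h : n + 1 + p = (n + p) + 1 := by ring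
    rw [h]
    show JacobiA a b (n + p) z * JacobiT a b (n + p) z = _
    rw [A_per p a b hpera hperb ha0, ih]
    show _ = (JacobiA a b n z * JacobiT a b n z) * _
    rw [Matrix.mul_assoc]

lemma T_pow (p : ℕ) (a b : ℕ → ℝ)
    (hpera : ∀ n, 1 ≤ n → a (n + p) = a n)
    (hperb : ∀ n, 1 ≤ n → b (n + p) = b n)
    (ha0 : a 0 = a p) (z : ℂ) (r : ℕ) :
    ∀ m, JacobiT a b (m * p + r) z = JacobiT a b r z * (JacobiT a b p z) ^ m := by
  intro m
  induction m with
  | zero => simp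
  | succ m ih =>
    have h : (m + 1) * p + r = (m * p + r) + p := by ring
    rw [h, T_add p a b hpera hperb ha0, ih, pow_succ, Matrix.mul_assoc]

lemma detA (a b : ℕ → ℝ) (ha : ∀ n, 1 ≤ n → 0 < a n) (k : ℕ) (z : ℂ) :
    (JacobiA a b k z).det = (a k : ℂ) / (a (k+1) : ℂ) := by
  have hA : (a (k+1) : ℂ) ≠ 0 := by
    exact_mod_cast (ha (k+1) (Nat.le_add_left 1 k)).ne'
  simp only [JacobiA, Matrix.det_fin_two, Matrix.smul_apply, Matrix.cons_val', Matrix.cons_val_zero,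
    Matrix.cons_val_one, Matrix.head_cons, Matrix.head_fin_const, Matrix.empty_val',
    Matrix.cons_val_fin_one, Matrix.of_apply, smul_eq_mul]
  field_simp
  ring

lemma detT (a b : ℕ → ℝ) (ha : ∀ n, 1 ≤ n → 0 < a n) (ha0' : a 0 ≠ 0) (z : ℂ) :
    ∀ n, (JacobiT a b n z).det = (a 0 : ℂ) / (a n : ℂ) := by
  intro n
  induction n with
  | zero =>
    show (1 : Matrix (Fin 2) (Fin 2) ℂ).det = _
    rw [Matrix.det_one, eq_comm, div_self (by exact_mod_cast ha0')]
  | succ n ih =>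
    have han : (a n : ℂ) ≠ 0 := by
      rcases Nat.eq_zero_or_pos n with h | h
      · subst h; exact_mod_cast ha0'
      · exact_mod_cast (ha n h).ne'
    have hA : (a (n+1) : ℂ) ≠ 0 := by
      exact_mod_cast (ha (n+1) (Nat.le_add_left 1 n)).ne'
    show (JacobiA a b n z * JacobiT a b n z).det = _
    rw [Matrix.det_mul, detA a b ha, ih]
    field_simp

lemma CH2 (M : Matrix (Fin 2) (Fin 2) ℂ) (hdet : M.det = 1) :
    M * M = M.trace • M - (1 : Matrix (Fin 2) (Fin 2) ℂ) := by
  have h := Matrix.det_fin_two M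
  rw [hdet] at h
  ext i j
  fin_cases i <;> fin_cases j <;>
    simp only [Matrix.mul_apply, Fin.sum_univ_two, Matrix.trace_fin_two, Matrix.one_apply,
      Matrix.sub_apply, Matrix.smul_apply, smul_eq_mul] <;>
    norm_num
  all_goals first
    | linear_combination h
    | linear_combination -h
    | ring1

lemma pow_decomp (M : Matrix (Fin 2) (Fin 2) ℂ) (hdet : M.det = 1)
    (gp gm : ℂ) (hsum : gp + gm = M.trace) (hprod : gp * gm = 1) (hne : gp ≠ gm) :
    ∀ m : ℕ, M ^ m = (((gp ^ m - gm ^ m) / (gp - gm)) • M)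
      + ((gp * gm ^ m - gm * gp ^ m) / (gp - gm)) • (1 : Matrix (Fin 2) (Fin 2) ℂ) := by
  have hne' : gp - gm ≠ 0 := sub_ne_zero.mpr hne
  intro m
  induction m with
  | zero =>
    rw [pow_zero, pow_zero, pow_zero, sub_self, zero_div, zero_smul, zero_add,
      show gp * 1 - gm * 1 = gp - gm by ring, div_self hne', one_smul]
  | succ m ih =>
    have hc : ((gp ^ m - gm ^ m) / (gp - gm)) * M.trace + (gp * gm ^ m - gm * gp ^ m) / (gp - gm)
        = (gp ^ (m+1) - gm ^ (m+1)) / (gp - gm) := by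
      rw [← hsum]; field_simp; ring
    have hd : (gp * gm ^ (m+1) - gm * gp ^ (m+1)) / (gp - gm)
        = -((gp ^ m - gm ^ m) / (gp - gm)) := by
      field_simp
      linear_combination (gm ^ m - gp ^ m) * hprod
    rw [pow_succ, ih, add_mul, smul_mul_assoc, smul_mul_assoc, one_mul, CH2 M hdet, ← hc, hd]
    module

lemma contA (a b : ℕ → ℝ) (k : ℕ) : Continuous fun z : ℂ => JacobiA a b k z := by
  apply continuous_matrix
  intro i j
  fin_cases i <;> fin_cases j <;> simp [JacobiA] <;> fun_prop

lemma contT (a b : ℕ → ℝ) (n : ℕ) : Continuous fun z : ℂ => JacobiT a b n z := by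
  induction n with
  | zero => exact continuous_const
  | succ n ih => exact (contA a b n).matrix_mul ih

lemma contTij (a b : ℕ → ℝ) (n : ℕ) (i j : Fin 2) :
    Continuous fun z : ℂ => JacobiT a b n z i j := (contT a b n).matrix_elem i j

/-- Master identity: `p_{mp+r-1}(z) = gp^m J(z) + gm^m K(z)`. -/
lemma key_identity (p : ℕ) (hp : 1 ≤ p) (a b : ℕ → ℝ)
    (ha : ∀ n, 1 ≤ n → 0 < a n)
    (hpera : ∀ n, 1 ≤ n → a (n + p) = a n)
    (hperb : ∀ n, 1 ≤ n → b (n + p) = b n)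
    (ha0 : a 0 = a p)
    (P : ℕ → Polynomial ℝ) (hP0 : P 0 = 1)
    (hPrec0 : (X : Polynomial ℝ) * P 0 = a 1 • P 1 + b 1 • P 0)
    (hPrec : ∀ n, 1 ≤ n →
      (X : Polynomial ℝ) * P n = a (n + 1) • P (n + 1) + b (n + 1) • P n + a n • P (n - 1))
    (r : ℕ) (hr1 : 1 ≤ r) (z : ℂ) (gp gm : ℂ)
    (hsum : gp + gm = JacobiDisc a b p z) (hprod : gp * gm = 1) (hne : gp ≠ gm) (m : ℕ) :
    aeval z (P (m * p + r - 1)) =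
      gp ^ m * ((JacobiT a b p z 1 0 * JacobiT a b r z 1 1
        + (JacobiT a b p z 0 0 - gm) * JacobiT a b r z 1 0) / (gp - gm))
      + gm ^ m * ((-(JacobiT a b p z 1 0) * JacobiT a b r z 1 1
        + (gp - JacobiT a b p z 0 0) * JacobiT a b r z 1 0) / (gp - gm)) := by
  have hne' : gp - gm ≠ 0 := sub_ne_zero.mpr hne
  have hn0 : m * p + r ≠ 0 := by omega
  have h10 : JacobiT a b (m*p+r) z 1 0 = aeval z (P (m*p+r-1)) := by
    have h := (T_entries a b ha P hP0 hPrec0 hPrec z (m*p+r)).2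
    rw [if_neg hn0] at h; exact h
  have hdet : (JacobiT a b p z).det = 1 := by
    rw [detT a b ha (by rw [ha0]; exact (ha p hp).ne') z p, ha0,
      div_self (by exact_mod_cast (ha p hp).ne')]
  rw [← h10, T_pow p a b hpera hperb ha0 z r m,
    pow_decomp _ hdet gp gm hsum hprod hne m]
  simp only [Matrix.mul_add, Matrix.mul_smul, Matrix.mul_one, Matrix.add_apply,
    Matrix.smul_apply, smul_eq_mul, Matrix.mul_apply, Fin.sum_univ_two,
    Matrix.one_apply_eq, Matrix.one_apply_ne (by decide : (1:Fin 2) ≠ 0)]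
  field_simp
  ring

set_option maxHeartbeats 1000000 in
/-- **Theorem 2.4, (2.39) and (1).** Off the bands,
`Γ₊(z₀)^{-m} p_{mp+r-1}(z₀) → j_r(z₀)`; consequently if `j_r(z₀) ≠ 0`, then
`p_{mp+r-1}` is nonvanishing near `z₀` for `m` large. -/
theorem oprl_periodic_jost_limit_and_nonvanishing
    (p : ℕ) (hp : 1 ≤ p) (a b : ℕ → ℝ)
    (ha : ∀ n, 1 ≤ n → 0 < a n)
    (hpera : ∀ n, 1 ≤ n → a (n + p) = a n)
    (hperb : ∀ n, 1 ≤ n → b (n + p) = b n)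
    (ha0 : a 0 = a p)
    (P : ℕ → Polynomial ℝ)
    (hP0 : P 0 = 1)
    (hPrec0 : (X : Polynomial ℝ) * P 0 = a 1 • P 1 + b 1 • P 0)
    (hPrec : ∀ n, 1 ≤ n →
      (X : Polynomial ℝ) * P n = a (n + 1) • P (n + 1) + b (n + 1) • P n + a n • P (n - 1))
    (r : ℕ) (hr1 : 1 ≤ r) (hrp : r ≤ p)
    (z₀ : ℂ)
    (hz₀ : ¬ ∃ t : ℝ, t ∈ Set.Icc (-2 : ℝ) 2 ∧ JacobiDisc a b p z₀ = (t : ℂ))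
    (Γp Γm : ℂ)
    (hΓp : Γp ^ 2 - JacobiDisc a b p z₀ * Γp + 1 = 0)
    (hΓm : Γm ^ 2 - JacobiDisc a b p z₀ * Γm + 1 = 0)
    (habs : ‖Γm‖ < ‖Γp‖) :
    Tendsto (fun m : ℕ => (Γp ^ m)⁻¹ * aeval z₀ (P (m * p + r - 1))) atTop
        (nhds (JacobiJost a b p r Γp Γm z₀)) ∧
      (JacobiJost a b p r Γp Γm z₀ ≠ 0 →
        ∃ ε > (0 : ℝ), ∃ M : ℕ, ∀ m : ℕ, M ≤ m → ∀ z : ℂ,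
          ‖z - z₀‖ < ε → aeval z (P (m * p + r - 1)) ≠ 0) := by
  have hΓne : Γp ≠ Γm := by
    intro h; rw [h] at habs; exact lt_irrefl _ habs
  have hΓne' : Γp - Γm ≠ 0 := sub_ne_zero.mpr hΓne
  have hsum0 : Γp + Γm = JacobiDisc a b p z₀ := by
    have h2 : (Γp - Γm) * (Γp + Γm - JacobiDisc a b p z₀) = 0 := by
      linear_combination hΓp - hΓm
    rcases mul_eq_zero.mp h2 with h | h
    · exact absurd h hΓne'
    · exact sub_eq_zero.mp h
  have hprod0 : Γp * Γm = 1 := by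
    linear_combination -hΓp + Γp * hsum0
  have hΓp0 : Γp ≠ 0 := left_ne_zero_of_mul_eq_one hprod0
  have habs1 : 1 < ‖Γp‖ := by
    have h1 : ‖Γp‖ * ‖Γm‖ = 1 := by
      rw [← norm_mul, hprod0, norm_one]
    nlinarith [norm_nonneg Γm, norm_nonneg Γp]
  have hΓpabs : 0 < ‖Γp‖ := lt_trans zero_lt_one habs1
  set J : ℂ := (JacobiT a b p z₀ 1 0 * JacobiT a b r z₀ 1 1
      + (JacobiT a b p z₀ 0 0 - Γm) * JacobiT a b r z₀ 1 0) / (Γp - Γm) with hJdef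
  set K : ℂ := (-(JacobiT a b p z₀ 1 0) * JacobiT a b r z₀ 1 1
      + (Γp - JacobiT a b p z₀ 0 0) * JacobiT a b r z₀ 1 0) / (Γp - Γm) with hKdef
  have hJJ : JacobiJost a b p r Γp Γm z₀ = J := by
    rw [JacobiJost, hJdef]
    field_simp
  have hkey := fun m => key_identity p hp a b ha hpera hperb ha0 P hP0 hPrec0 hPrec
    r hr1 z₀ Γp Γm hsum0 hprod0 hΓne m
  constructor
  · -- the limit
    have heq : ∀ m : ℕ, (Γp ^ m)⁻¹ * aeval z₀ (P (m * p + r - 1)) = J + (Γm / Γp) ^ m * K := by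
      intro m
      rw [hkey m, ← hJdef, ← hKdef]
      have hpn : (Γp : ℂ) ^ m ≠ 0 := pow_ne_zero _ hΓp0
      field_simp
      linear_combination (-(Γm ^ m * K)) * mul_inv_cancel₀ hpn
    rw [hJJ]
    have hlt : ‖Γm / Γp‖ < 1 := by
      rw [norm_div, div_lt_one hΓpabs]
      exact habs
    have htend : Tendsto (fun m : ℕ => J + (Γm / Γp) ^ m * K) atTop (nhds (J + 0 * K)) :=
      tendsto_const_nhds.add
        ((tendsto_pow_atTop_nhds_zero_of_norm_lt_one hlt).mul_const K)
    rw [zero_mul, add_zero] at htend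
    exact Tendsto.congr (fun m => (heq m).symm) htend
  · -- nonvanishing near z₀
    intro hJ0
    have hJne : J ≠ 0 := by rw [← hJJ]; exact hJ0
    have hJabs : 0 < ‖J‖ := norm_pos_iff.mpr hJne
    set D : ℂ → ℂ := fun z => JacobiDisc a b p z with hD
    have hcontD : Continuous D := by
      have h : D = fun z => JacobiT a b p z 0 0 + JacobiT a b p z 1 1 := by
        funext z; exact Matrix.trace_fin_two _
      rw [h]; exact (contTij a b p 0 0).add (contTij a b p 1 1)
    set w : ℂ → ℂ := fun z => D z ^ 2 - 4 with hw
    have hcontw : Continuous w := by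
      rw [hw]; exact (hcontD.pow 2).sub continuous_const
    have hsumD0 : Γp + Γm = D z₀ := hsum0
    have hw0 : w z₀ = (Γp - Γm) ^ 2 := by
      show D z₀ ^ 2 - 4 = (Γp - Γm) ^ 2
      linear_combination (-(D z₀ + Γp + Γm)) * hsumD0 + 4 * hprod0
    have hwne : w z₀ ≠ 0 := by rw [hw0]; exact pow_ne_zero 2 hΓne'
    set s : ℂ → ℂ := fun z => (Γp - Γm) * Complex.exp ((1/2 : ℂ) * Complex.log (w z / w z₀))
      with hs
    have hs0 : s z₀ = Γp - Γm := by
      show (Γp - Γm) * Complex.exp ((1/2 : ℂ) * Complex.log (w z₀ / w z₀)) = _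
      rw [div_self hwne, Complex.log_one, mul_zero, Complex.exp_zero, mul_one]
    have hsne : ∀ z, s z ≠ 0 := fun z => mul_ne_zero hΓne' (Complex.exp_ne_zero _)
    have hssq : ∀ z, w z ≠ 0 → s z ^ 2 = w z := by
      intro z hz
      show ((Γp - Γm) * Complex.exp ((1/2 : ℂ) * Complex.log (w z / w z₀))) ^ 2 = w z
      have he : Complex.exp ((1/2 : ℂ) * Complex.log (w z / w z₀)) ^ 2
          = Complex.exp (Complex.log (w z / w z₀)) := by
        rw [← Complex.exp_nat_mul]
        congr 1
        push_cast
        ring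
      rw [mul_pow, he, Complex.exp_log (div_ne_zero hz hwne), hw0]
      field_simp
    set gP : ℂ → ℂ := fun z => (D z + s z) / 2 with hgP
    set gM : ℂ → ℂ := fun z => (D z - s z) / 2 with hgM
    have hsumD : Γp + Γm = D z₀ := hsum0
    have hgP0 : gP z₀ = Γp := by
      show (D z₀ + s z₀) / 2 = Γp
      rw [hs0, ← hsumD]; ring
    have hgM0 : gM z₀ = Γm := by
      show (D z₀ - s z₀) / 2 = Γm
      rw [hs0, ← hsumD]; ring
    have hgdiff : ∀ z, gP z - gM z = s z := fun z => by
      show (D z + s z) / 2 - (D z - s z) / 2 = s z; ring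
    have hgsum : ∀ z, gP z + gM z = JacobiDisc a b p z := fun z => by
      show (D z + s z) / 2 + (D z - s z) / 2 = D z; ring
    have hgne : ∀ z, gP z ≠ gM z := fun z => by
      intro h
      exact hsne z (by rw [← hgdiff z, h, sub_self])
    have hgprod : ∀ z, w z ≠ 0 → gP z * gM z = 1 := by
      intro z hz
      have h := hssq z hz
      show (D z + s z) / 2 * ((D z - s z) / 2) = 1
      have hw' : w z = D z ^ 2 - 4 := rfl
      rw [hw'] at h
      field_simp
      linear_combination -h
    set Jf : ℂ → ℂ := fun z => (JacobiT a b p z 1 0 * JacobiT a b r z 1 1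
        + (JacobiT a b p z 0 0 - gM z) * JacobiT a b r z 1 0) / (gP z - gM z) with hJf
    set Kf : ℂ → ℂ := fun z => (-(JacobiT a b p z 1 0) * JacobiT a b r z 1 1
        + (gP z - JacobiT a b p z 0 0) * JacobiT a b r z 1 0) / (gP z - gM z) with hKf
    have hJf0 : Jf z₀ = J := by
      show (JacobiT a b p z₀ 1 0 * JacobiT a b r z₀ 1 1
        + (JacobiT a b p z₀ 0 0 - gM z₀) * JacobiT a b r z₀ 1 0) / (gP z₀ - gM z₀) = J
      rw [hgP0, hgM0, hJdef]
    -- continuity at z₀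
    have hcontS : ContinuousAt s z₀ := by
      apply ContinuousAt.mul continuousAt_const
      apply Complex.continuous_exp.continuousAt.comp
      apply ContinuousAt.mul continuousAt_const
      have hlog : ContinuousAt Complex.log (w z₀ / w z₀) := by
        rw [div_self hwne]
        exact continuousAt_clog Complex.one_mem_slitPlane
      have hdivc : ContinuousAt (fun x : ℂ => w x / w z₀) z₀ :=
        hcontw.continuousAt.div_const (w z₀)
      exact ContinuousAt.comp (x := z₀) (f := fun x : ℂ => w x / w z₀) hlog hdivc
    have hcontgP : ContinuousAt gP z₀ := (hcontD.continuousAt.add hcontS).div_const 2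
    have hcontgM : ContinuousAt gM z₀ := (hcontD.continuousAt.sub hcontS).div_const 2
    have hdenne : gP z₀ - gM z₀ ≠ 0 := by rw [hgdiff z₀, hs0]; exact hΓne'
    have hcontJf : ContinuousAt Jf z₀ := by
      apply ContinuousAt.div
      · exact (((contTij a b p 1 0).continuousAt.mul (contTij a b r 1 1).continuousAt).add
          (((contTij a b p 0 0).continuousAt.sub hcontgM).mul (contTij a b r 1 0).continuousAt))
      · exact hcontgP.sub hcontgM
      · exact hdenne
    have hcontKf : ContinuousAt Kf z₀ := by
      apply ContinuousAt.div
      · exact (((contTij a b p 1 0).continuousAt.neg.mul (contTij a b r 1 1).continuousAt).add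
          ((hcontgP.sub (contTij a b p 0 0).continuousAt).mul (contTij a b r 1 0).continuousAt))
      · exact hcontgP.sub hcontgM
      · exact hdenne
    -- events
    set C : ℝ := ‖Kf z₀‖ + 1 with hC
    have hCpos : 0 < C := by positivity
    set θ : ℝ := (‖Γm‖ / ‖Γp‖ + 1) / 2 with hθ
    have hρ : ‖Γm‖ / ‖Γp‖ < 1 := (div_lt_one hΓpabs).mpr habs
    have hρ0 : 0 ≤ ‖Γm‖ / ‖Γp‖ := by positivity
    have hθ1 : θ < 1 := by rw [hθ]; linarith
    have hθ0 : 0 ≤ θ := by rw [hθ]; linarith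
    have hρθ : ‖Γm‖ / ‖Γp‖ < θ := by rw [hθ]; linarith
    have E1 : ∀ᶠ z in nhds z₀, w z ≠ 0 := hcontw.continuousAt.eventually_ne hwne
    have E2 : ∀ᶠ z in nhds z₀, ‖J‖ / 2 < ‖Jf z‖ := by
      have h1 : ContinuousAt (fun z => ‖Jf z‖) z₀ :=
        continuous_norm.continuousAt.comp hcontJf
      have h2 : ‖J‖ / 2 < ‖Jf z₀‖ := by rw [hJf0]; linarith
      exact h1.eventually_const_lt h2
    have E3 : ∀ᶠ z in nhds z₀, ‖Kf z‖ < C := by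
      have h1 : ContinuousAt (fun z => ‖Kf z‖) z₀ :=
        continuous_norm.continuousAt.comp hcontKf
      exact h1.eventually_lt_const (by rw [hC]; linarith)
    have E4 : ∀ᶠ z in nhds z₀, ‖gM z‖ < θ * ‖gP z‖ := by
      have h1 : ContinuousAt (fun z => ‖gM z‖ - θ * ‖gP z‖) z₀ :=
        (continuous_norm.continuousAt.comp hcontgM).sub
          (continuousAt_const.mul (continuous_norm.continuousAt.comp hcontgP))
      have h2 : ‖gM z₀‖ - θ * ‖gP z₀‖ < 0 := by
        rw [hgM0, hgP0]
        have := (div_lt_iff₀ hΓpabs).mp hρθ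
        linarith
      have h3 := h1.eventually_lt_const h2
      filter_upwards [h3] with z hz
      linarith
    obtain ⟨ε, hε, hball⟩ := Metric.eventually_nhds_iff.mp (E1.and (E2.and (E3.and E4)))
    -- choice of M
    have htend : Tendsto (fun m : ℕ => C * θ ^ m) atTop (nhds 0) := by
      have h := tendsto_pow_atTop_nhds_zero_of_lt_one hθ0 hθ1
      simpa using h.const_mul C
    obtain ⟨M, hM⟩ := eventually_atTop.mp
      (htend.eventually_lt_const (by positivity : (0:ℝ) < ‖J‖ / 2))
    refine ⟨ε, hε, M, fun m hm z hz => ?_⟩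
    have hzball : dist z z₀ < ε := by rw [Complex.dist_eq]; exact hz
    obtain ⟨hw1, h2, h3, h4⟩ := hball hzball
    intro h0
    have hid : aeval z (P (m * p + r - 1)) = gP z ^ m * Jf z + gM z ^ m * Kf z := by
      rw [hJf, hKf]
      exact key_identity p hp a b ha hpera hperb ha0 P hP0 hPrec0 hPrec r hr1 z
        (gP z) (gM z) (hgsum z) (hgprod z hw1) (hgne z) m
    rw [h0] at hid
    have hgPne : gP z ≠ 0 := left_ne_zero_of_mul_eq_one (hgprod z hw1)
    have hgPpos : 0 < ‖gP z‖ := norm_pos_iff.mpr hgPne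
    have hflip : gP z ^ m * Jf z = -(gM z ^ m * Kf z) := by linear_combination -hid
    have habs_eq : ‖gP z‖ ^ m * ‖Jf z‖
        = ‖gM z‖ ^ m * ‖Kf z‖ := by
      have h' := congrArg norm hflip
      simpa [norm_mul, norm_pow] using h'
    have h5 : ‖gM z‖ ^ m ≤ (θ * ‖gP z‖) ^ m :=
      pow_le_pow_left₀ (norm_nonneg _) h4.le m
    have h6 : ‖gM z‖ ^ m * ‖Kf z‖
        ≤ (θ ^ m * ‖gP z‖ ^ m) * C := by
      rw [← mul_pow]
      exact mul_le_mul h5 h3.le (norm_nonneg _) (by positivity)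
    have h7 : ‖Jf z‖ ≤ θ ^ m * C := by
      have hpow : (0:ℝ) < ‖gP z‖ ^ m := pow_pos hgPpos m
      rw [← mul_le_mul_iff_right₀ hpow, habs_eq]
      calc ‖gM z‖ ^ m * ‖Kf z‖
          ≤ (θ ^ m * ‖gP z‖ ^ m) * C := h6
        _ = ‖gP z‖ ^ m * (θ ^ m * C) := by ring
    have h8 : C * θ ^ m < ‖J‖ / 2 := hM m hm
    have h10 : ‖Jf z‖ < ‖Jf z‖ :=
      lt_of_le_of_lt h7 (by rw [mul_comm]; exact lt_trans h8 h2)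
    exact lt_irrefl _ h10
end

section
/- For each r with 1 ≤ r ≤ p, the set {z ∈ ℂ : Δ(z) ∉ [−2, 2] and j_r(z) = 0} is finite and has at most 2p + 2r − 3 elements. (Theorem 2.4, part (3): there are at most 2p + 2r − 3 points off the bands that are limits of zeros of the polynomials p_{mp+r−1}.) -/
open Polynomial Matrix

/-- Polynomial one-step transfer matrix. -/
noncomputable def JApoly (a b : ℕ → ℝ) (k : ℕ) : Matrix (Fin 2) (Fin 2) (Polynomial ℂ) :=
  !![C ((a (k+1) : ℂ))⁻¹ * X - C ((b (k+1) : ℂ) * ((a (k+1) : ℂ))⁻¹),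
     -C ((a k : ℂ) * ((a (k+1) : ℂ))⁻¹);
     1, 0]

/-- Polynomial transfer matrix starting at site `k`. -/
noncomputable def JTpoly (a b : ℕ → ℝ) (k : ℕ) : ℕ → Matrix (Fin 2) (Fin 2) (Polynomial ℂ)
  | 0 => 1
  | m+1 => JApoly a b (k+m) * JTpoly a b k m

lemma JTpoly_eval (a b : ℕ → ℝ) (ha : ∀ n, 1 ≤ n → 0 < a n) (z : ℂ) :
    ∀ m, (JTpoly a b 0 m).map (eval z) = JacobiT a b m z := by
  intro m
  induction m with
  | zero => exact Matrix.map_one _ (by simp) (by simp)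
  | succ m ih =>
      show (JApoly a b (0+m) * JTpoly a b 0 m).map (eval z) = JacobiA a b m z * JacobiT a b m z
      rw [show ((eval z : Polynomial ℂ → ℂ) = ⇑(evalRingHom z)) from rfl, Matrix.map_mul]
      rw [show ⇑(evalRingHom z) = (eval z : Polynomial ℂ → ℂ) from rfl, ih]
      congr 1
      have hne : ((a (m+1) : ℂ)) ≠ 0 := by
        exact_mod_cast ne_of_gt (ha (m+1) (by omega))
      ext i j
      fin_cases i <;> fin_cases j <;>
        simp [JApoly, JacobiA, Matrix.map_apply, zero_add] <;> field_simp

lemma JTpoly_comp (a b : ℕ → ℝ) (k n : ℕ) :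
    ∀ m, JTpoly a b k (m + n) = JTpoly a b (k + n) m * JTpoly a b k n := by
  intro m
  induction m with
  | zero => simp [JTpoly]
  | succ m ih =>
      have h1 : m + 1 + n = (m + n) + 1 := by omega
      rw [h1, show JTpoly a b k ((m+n)+1) = JApoly a b (k+(m+n)) * JTpoly a b k (m+n) from rfl, ih,
        show k + (m+n) = k + n + m by omega, ← mul_assoc]
      rfl

lemma JTpoly_row (a b : ℕ → ℝ) (k m : ℕ) (j : Fin 2) :
    JTpoly a b k (m+1) 1 j = JTpoly a b k m 0 j := by
  show (JApoly a b (k+m) * JTpoly a b k m) 1 j = _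
  rw [Matrix.mul_apply, Fin.sum_univ_two]
  simp [JApoly]

lemma JTpoly_deg (a b : ℕ → ℝ) (k : ℕ) :
    ∀ m (i j : Fin 2), (JTpoly a b k m i j).natDegree ≤ m := by
  intro m
  induction m with
  | zero =>
      intro i j
      fin_cases i <;> fin_cases j <;> simp [JTpoly, Matrix.one_apply]
  | succ m ih =>
      intro i j
      show ((JApoly a b (k+m) * JTpoly a b k m) i j).natDegree ≤ m + 1
      rw [Matrix.mul_apply, Fin.sum_univ_two]
      refine le_trans (natDegree_add_le _ _) (max_le ?_ ?_) <;>
        refine le_trans (natDegree_mul_le) ?_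
      · have h1 : (JApoly a b (k+m) i 0).natDegree ≤ 1 := by
          fin_cases i
          · simp only [JApoly, Matrix.cons_val', Matrix.cons_val_zero, Matrix.empty_val',
              Matrix.cons_val_fin_one, Matrix.cons_val_one, Matrix.head_cons, Matrix.head_fin_const]
            refine le_trans (natDegree_sub_le _ _)
              (max_le (le_trans natDegree_mul_le (by simp)) (by rw [natDegree_C]; exact Nat.zero_le 1))
          · simp [JApoly]
        have := ih 0 j; omega
      · have h1 : (JApoly a b (k+m) i 1).natDegree ≤ 1 := by
          fin_cases i <;> simp [JApoly] <;>
            exact le_trans (natDegree_mul_le) (by simp)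
        have := ih 1 j; omega

lemma JTpoly_coeff00 (a b : ℕ → ℝ) (k : ℕ) :
    ∀ m, (JTpoly a b k m 0 0).coeff m = ∏ i ∈ Finset.range m, ((a (k+i+1) : ℂ))⁻¹ := by
  intro m
  induction m with
  | zero => simp [JTpoly, Matrix.one_apply]
  | succ m ih =>
      have e1 : (JTpoly a b k m 0 0).coeff (m+1) = 0 :=
        coeff_eq_zero_of_natDegree_lt (lt_of_le_of_lt (JTpoly_deg a b k m 0 0) (by omega))
      have e2 : (JTpoly a b k m 1 0).coeff (m+1) = 0 :=
        coeff_eq_zero_of_natDegree_lt (lt_of_le_of_lt (JTpoly_deg a b k m 1 0) (by omega))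
      show ((JApoly a b (k+m) * JTpoly a b k m) 0 0).coeff (m+1) = _
      rw [Matrix.mul_apply, Fin.sum_univ_two]
      have hA0 : JApoly a b (k+m) 0 0
          = C ((a (k+m+1) : ℂ))⁻¹ * X - C ((b (k+m+1) : ℂ) * ((a (k+m+1) : ℂ))⁻¹) := by
        simp [JApoly]
      have hA1 : JApoly a b (k+m) 0 1 = -C ((a (k+m) : ℂ) * ((a (k+m+1) : ℂ))⁻¹) := by
        simp [JApoly]
      rw [hA0, hA1, coeff_add, sub_mul, coeff_sub, mul_assoc, coeff_C_mul, coeff_X_mul,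
        coeff_C_mul, neg_mul, coeff_neg, coeff_C_mul, ih, e1, e2, Finset.prod_range_succ]
      ring

lemma JTpoly_det (a b : ℕ → ℝ) (k : ℕ) :
    ∀ m, (JTpoly a b k m).det =
      C (∏ i ∈ Finset.range m, ((a (k+i) : ℂ) * ((a (k+i+1) : ℂ))⁻¹)) := by
  intro m
  induction m with
  | zero => simp [JTpoly]
  | succ m ih =>
      show (JApoly a b (k+m) * JTpoly a b k m).det = _
      rw [Matrix.det_mul, ih]
      have : (JApoly a b (k+m)).det = C ((a (k+m) : ℂ) * ((a (k+m+1) : ℂ))⁻¹) := by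
        rw [JApoly, Matrix.det_fin_two_of]
        ring
      rw [this, ← C_mul, Finset.prod_range_succ, mul_comm]

lemma JTpoly_coeff00_ne (a b : ℕ → ℝ) (ha : ∀ n, 1 ≤ n → 0 < a n) (k m : ℕ) :
    (JTpoly a b k m 0 0).coeff m ≠ 0 := by
  rw [JTpoly_coeff00]
  exact Finset.prod_ne_zero_iff.2 fun i _ =>
    inv_ne_zero (Complex.ofReal_ne_zero.2 (ne_of_gt (ha _ (by omega))))

lemma JTpoly_nd00 (a b : ℕ → ℝ) (ha : ∀ n, 1 ≤ n → 0 < a n) (k m : ℕ) :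
    (JTpoly a b k m 0 0).natDegree = m :=
  le_antisymm (JTpoly_deg a b k m 0 0)
    (le_natDegree_of_ne_zero (JTpoly_coeff00_ne a b ha k m))

lemma JTpoly_lc00_ne (a b : ℕ → ℝ) (ha : ∀ n, 1 ≤ n → 0 < a n) (k m : ℕ) :
    (JTpoly a b k m 0 0).leadingCoeff ≠ 0 := by
  rw [leadingCoeff, JTpoly_nd00 a b ha]
  exact JTpoly_coeff00_ne a b ha k m

lemma JTpoly_ne00 (a b : ℕ → ℝ) (ha : ∀ n, 1 ≤ n → 0 < a n) (k m : ℕ) :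
    (JTpoly a b k m 0 0) ≠ 0 :=
  leadingCoeff_ne_zero.1 (JTpoly_lc00_ne a b ha k m)
/-- **Theorem 2.4, part (3).** For each `1 ≤ r ≤ p`, the set of points off the bands
where the Jost function `j_r` vanishes is finite, with at most `2p + 2r - 3` elements. -/
theorem oprl_periodic_jost_zero_set_finite
    (p : ℕ) (hp : 1 ≤ p) (a b : ℕ → ℝ)
    (ha : ∀ n, 1 ≤ n → 0 < a n)
    (hpera : ∀ n, 1 ≤ n → a (n + p) = a n)
    (hperb : ∀ n, 1 ≤ n → b (n + p) = b n)
    (ha0 : a 0 = a p)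
    (P : ℕ → Polynomial ℝ)
    (hP0 : P 0 = 1)
    (hPrec0 : (X : Polynomial ℝ) * P 0 = a 1 • P 1 + b 1 • P 0)
    (hPrec : ∀ n, 1 ≤ n →
      (X : Polynomial ℝ) * P n = a (n + 1) • P (n + 1) + b (n + 1) • P n + a n • P (n - 1))
    (r : ℕ) (hr1 : 1 ≤ r) (hrp : r ≤ p)
    (S : Set ℂ)
    (hS : S = {z : ℂ |
      (¬ ∃ t : ℝ, t ∈ Set.Icc (-2 : ℝ) 2 ∧ JacobiDisc a b p z = (t : ℂ)) ∧
      ∃ Γp Γm : ℂ,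
        Γp ^ 2 - JacobiDisc a b p z * Γp + 1 = 0 ∧
        Γm ^ 2 - JacobiDisc a b p z * Γm + 1 = 0 ∧
        ‖Γm‖ < ‖Γp‖ ∧
        JacobiJost a b p r Γp Γm z = 0}) :
    S.Finite ∧ S.ncard ≤ 2 * p + 2 * r - 3 := by
  subst hS
  obtain ⟨p', rfl⟩ : ∃ p', p = p' + 1 := ⟨p - 1, by omega⟩
  obtain ⟨r', rfl⟩ : ∃ r', r = r' + 1 := ⟨r - 1, by omega⟩
  have hrp' : r' ≤ p' := by omega
  -- abbreviations for the polynomial matrix entries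
  set T00 : Polynomial ℂ := JTpoly a b 0 (p'+1) 0 0 with hT00
  set T11 : Polynomial ℂ := JTpoly a b 0 (p'+1) 1 1 with hT11
  set T10 : Polynomial ℂ := JTpoly a b 0 (p'+1) 1 0 with hT10
  set R11 : Polynomial ℂ := JTpoly a b 0 (r'+1) 1 1 with hR11
  set D : Polynomial ℂ := JTpoly a b 0 (r'+1) 1 0 with hD
  set F : Polynomial ℂ :=
    T10*R11*(T10*R11) + (T00 - T11)*(T10*R11)*D + (1 - T00*T11)*(D*D) with hF
  -- evaluation of entries
  have hev : ∀ m (i j : Fin 2) (z : ℂ),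
      eval z (JTpoly a b 0 m i j) = JacobiT a b m z i j := by
    intro m i j z
    rw [← JTpoly_eval a b ha z m]
    rfl
  -- Step A : S is contained in the root set of F
  have hsub : {z : ℂ |
      (¬ ∃ t : ℝ, t ∈ Set.Icc (-2 : ℝ) 2 ∧ JacobiDisc a b (p'+1) z = (t : ℂ)) ∧
      ∃ Γp Γm : ℂ,
        Γp ^ 2 - JacobiDisc a b (p'+1) z * Γp + 1 = 0 ∧
        Γm ^ 2 - JacobiDisc a b (p'+1) z * Γm + 1 = 0 ∧
        ‖Γm‖ < ‖Γp‖ ∧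
        JacobiJost a b (p'+1) (r'+1) Γp Γm z = 0} ⊆ {z : ℂ | F.IsRoot z} := by
    rintro z ⟨-, Γp, Γm, -, hqm, habs, hJ⟩
    have hne : Γp - Γm ≠ 0 := by
      intro h
      rw [sub_eq_zero] at h
      rw [h] at habs
      exact lt_irrefl _ habs
    rw [JacobiJost] at hJ
    have hJ2 : JacobiT a b (p'+1) z 1 0 * JacobiT a b (r'+1) z 1 1 +
        (JacobiT a b (p'+1) z 0 0 - Γm) * JacobiT a b (r'+1) z 1 0 = 0 := by
      field_simp at hJ
      linear_combination hJ
    have hdisc : JacobiDisc a b (p'+1) z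
        = JacobiT a b (p'+1) z 0 0 + JacobiT a b (p'+1) z 1 1 := by
      rw [JacobiDisc, Matrix.trace_fin_two]
    rw [hdisc] at hqm
    show F.IsRoot z
    rw [IsRoot, hF]
    simp only [eval_add, eval_mul, eval_sub, eval_one, hT00, hT11, hT10, hR11, hD, hev]
    linear_combination (JacobiT a b (p'+1) z 1 0 * JacobiT a b (r'+1) z 1 1
        + (Γm - JacobiT a b (p'+1) z 0 0) * JacobiT a b (r'+1) z 1 0
        + (JacobiT a b (p'+1) z 0 0 - JacobiT a b (p'+1) z 1 1) * JacobiT a b (r'+1) z 1 0) * hJ2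
      + (JacobiT a b (r'+1) z 1 0)^2 * hqm
  -- degrees of the atoms
  have hT10eq : T10 = JTpoly a b 0 p' 0 0 := JTpoly_row a b 0 p' 0
  have hDeq : D = JTpoly a b 0 r' 0 0 := JTpoly_row a b 0 r' 0
  have hR11eq : R11 = JTpoly a b 0 r' 0 1 := JTpoly_row a b 0 r' 1
  have hT11eq : T11 = JTpoly a b 0 p' 0 1 := JTpoly_row a b 0 p' 1
  have ndT00 : T00.natDegree = p' + 1 := JTpoly_nd00 a b ha 0 (p'+1)
  have ndT10 : T10.natDegree = p' := by rw [hT10eq]; exact JTpoly_nd00 a b ha 0 p'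
  have ndD : D.natDegree = r' := by rw [hDeq]; exact JTpoly_nd00 a b ha 0 r'
  have ndR11 : R11.natDegree ≤ r' := by rw [hR11eq]; exact JTpoly_deg a b 0 r' 0 1
  have ndT11 : T11.natDegree ≤ p' := by rw [hT11eq]; exact JTpoly_deg a b 0 p' 0 1
  -- Step B : natDegree F ≤ 2p' + 2r' + 1
  have bC : (T10*R11).natDegree ≤ p' + r' :=
    le_trans natDegree_mul_le (by omega)
  have bsub : (T00 - T11).natDegree ≤ p' + 1 :=
    le_trans (natDegree_sub_le _ _) (max_le (le_of_eq ndT00) (by omega))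
  have bsub2 : (1 - T00*T11).natDegree ≤ 2*p' + 1 := by
    refine le_trans (natDegree_sub_le _ _) (max_le (by simp) ?_)
    exact le_trans natDegree_mul_le (by omega)
  have bF : F.natDegree ≤ 2*p' + 2*r' + 1 := by
    rw [hF]
    refine le_trans (natDegree_add_le _ _) (max_le (le_trans (natDegree_add_le _ _)
      (max_le ?_ ?_)) ?_)
    · exact le_trans natDegree_mul_le (by omega)
    · refine le_trans natDegree_mul_le ?_
      have := le_trans natDegree_mul_le (add_le_add bsub bC)
      omega
    · refine le_trans natDegree_mul_le ?_
      have : (D*D).natDegree ≤ 2*r' := le_trans natDegree_mul_le (by omega)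
      omega
  -- Step C : F ≠ 0
  have hcomp : JTpoly a b 0 (p'+1) = JTpoly a b (r'+1) (p' - r') * JTpoly a b 0 (r'+1) := by
    have h := JTpoly_comp a b 0 (r'+1) (p' - r')
    rw [show p' - r' + (r'+1) = p' + 1 by omega] at h
    simpa using h
  set N : Matrix (Fin 2) (Fin 2) (Polynomial ℂ) := JTpoly a b (r'+1) (p' - r') with hN
  have h10 : T10 = N 1 0 * JTpoly a b 0 (r'+1) 0 0 + N 1 1 * D := by
    rw [hT10, hcomp, Matrix.mul_apply, Fin.sum_univ_two, hD]
  have h00 : T00 = N 0 0 * JTpoly a b 0 (r'+1) 0 0 + N 0 1 * D := by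
    rw [hT00, hcomp, Matrix.mul_apply, Fin.sum_univ_two, hD]
  have h11 : T11 = N 1 0 * JTpoly a b 0 (r'+1) 0 1 + N 1 1 * R11 := by
    rw [hT11, hcomp, Matrix.mul_apply, Fin.sum_univ_two, hR11]
  have h01 : T00 = T00 := rfl
  set E : Polynomial ℂ :=
    N 1 0 * (JTpoly a b 0 (r'+1) 0 0 * R11 - JTpoly a b 0 (r'+1) 0 1 * D) with hE
  have hFid : F = D*D + (T00 + T11)*E*D + E*E := by
    rw [hF, hE, h10, h00, h11]
    ring
  -- determinant
  set e : ℂ := ∏ i ∈ Finset.range (r'+1), ((a i : ℂ) * ((a (i+1) : ℂ))⁻¹) with he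
  have hdetTr : JTpoly a b 0 (r'+1) 0 0 * R11 - JTpoly a b 0 (r'+1) 0 1 * D = C e := by
    have h := JTpoly_det a b 0 (r'+1)
    rw [Matrix.det_fin_two] at h
    rw [hR11, hD, h, he]
    norm_num
  have hene : e ≠ 0 := by
    rw [he]
    refine Finset.prod_ne_zero_iff.2 fun i hi => mul_ne_zero ?_
      (inv_ne_zero (Complex.ofReal_ne_zero.2 (ne_of_gt (ha _ (by omega)))))
    rcases Nat.eq_zero_or_pos i with h0 | h0
    · subst h0
      rw [ha0]
      exact Complex.ofReal_ne_zero.2 (ne_of_gt (ha _ (by omega)))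
    · exact Complex.ofReal_ne_zero.2 (ne_of_gt (ha _ (by omega)))
  have hDne : D ≠ 0 := by
    intro h
    have := JTpoly_coeff00_ne a b ha 0 r'
    rw [← hDeq, h] at this
    simp at this
  have hFne : F ≠ 0 := by
    rcases eq_or_lt_of_le hrp' with heq | hlt
    · -- r' = p' : here N = 1, E = 0, F = D*D
      have hN10 : N 1 0 = 0 := by
        rw [hN, ← heq, Nat.sub_self]
        simp [JTpoly, Matrix.one_apply]
      have : F = D * D := by rw [hFid, hE, hN10]; ring
      rw [this]
      exact mul_ne_zero hDne hDne
    · -- r' < p'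
      obtain ⟨mm, hmm⟩ : ∃ mm, p' - r' = mm + 1 := ⟨p' - r' - 1, by omega⟩
      have hN10 : N 1 0 = JTpoly a b (r'+1) mm 0 0 := by
        rw [hN, hmm]; exact JTpoly_row a b (r'+1) mm 0
      have hEeq : E = JTpoly a b (r'+1) mm 0 0 * C e := by rw [hE, hdetTr, hN10]
      have hN10ne : JTpoly a b (r'+1) mm 0 0 ≠ 0 := JTpoly_ne00 a b ha (r'+1) mm
      have hEne : E ≠ 0 := by
        rw [hEeq]
        exact mul_ne_zero hN10ne (by simpa using hene)
      have ndE : E.natDegree = mm := by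
        rw [hEeq, natDegree_mul hN10ne (by simpa using hene), natDegree_C,
          JTpoly_nd00 a b ha]
        omega
      have lcE : E.leadingCoeff ≠ 0 := leadingCoeff_ne_zero.2 hEne
      -- the discriminant polynomial Δ = T00 + T11
      have cΔ : (T00 + T11).coeff (p'+1) = T00.coeff (p'+1) := by
        rw [coeff_add, coeff_eq_zero_of_natDegree_lt (lt_of_le_of_lt ndT11 (by omega)),
          add_zero]
      have cΔne : (T00 + T11).coeff (p'+1) ≠ 0 := by
        rw [cΔ]
        exact JTpoly_coeff00_ne a b ha 0 (p'+1)
      have ndΔ : (T00 + T11).natDegree = p' + 1 := by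
        refine le_antisymm (le_trans (natDegree_add_le _ _) (max_le (le_of_eq ndT00) (by omega)))
          (le_natDegree_of_ne_zero cΔne)
      have hΔne : T00 + T11 ≠ 0 := fun h => cΔne (by rw [h]; simp)
      -- the middle term has exact degree 2p'+... and nonzero top coefficient
      have n0 : ((T00 + T11) * E).natDegree = (p'+1) + mm := by
        rw [natDegree_mul hΔne hEne, ndΔ, ndE]
      have lcmid : ((T00 + T11) * E).leadingCoeff ≠ 0 :=
        leadingCoeff_ne_zero.2 (mul_ne_zero hΔne hEne)
      have key : F.coeff ((p'+1) + mm + r') ≠ 0 := by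
        have c1 : (D*D).coeff ((p'+1) + mm + r') = 0 :=
          coeff_eq_zero_of_natDegree_lt
            (lt_of_le_of_lt natDegree_mul_le (by rw [ndD]; omega))
        have c3 : (E*E).coeff ((p'+1) + mm + r') = 0 :=
          coeff_eq_zero_of_natDegree_lt
            (lt_of_le_of_lt natDegree_mul_le (by rw [ndE]; omega))
        have c2 : ((T00 + T11)*E*D).coeff ((p'+1) + mm + r')
            = ((T00 + T11)*E).leadingCoeff * D.leadingCoeff := by
          have := coeff_mul_degree_add_degree ((T00 + T11)*E) D
          rw [n0, ndD] at this
          exact this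
        rw [hFid, coeff_add, coeff_add, c1, c2, c3, zero_add, add_zero]
        exact mul_ne_zero lcmid (leadingCoeff_ne_zero.2 hDne)
      exact fun h => key (by rw [h]; simp)
  -- conclusion
  have hfin : {z : ℂ | F.IsRoot z}.Finite := Polynomial.finite_setOf_isRoot hFne
  refine ⟨hfin.subset hsub, ?_⟩
  have h1 : ({z : ℂ | F.IsRoot z}) = (F.roots.toFinset : Set ℂ) := by
    ext x
    simp [Multiset.mem_toFinset, Polynomial.mem_roots', hFne, IsRoot]
  calc Set.ncard _ ≤ ({z : ℂ | F.IsRoot z}).ncard := Set.ncard_le_ncard hsub hfin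
    _ = F.roots.toFinset.card := by rw [h1, Set.ncard_coe_finset]
    _ ≤ Multiset.card F.roots := Multiset.toFinset_card_le _
    _ ≤ F.natDegree := Polynomial.card_roots' F
    _ ≤ 2 * (p'+1) + 2 * (r'+1) - 3 := by omega
end
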